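/- For any truncation ℐ' ⊆ ℐ with associated truncated cluster space 𝔟̄ = span{X_μ|_ℋ : μ ∈ ℐ'} ⊆ 𝔟, the map T ↦ exp(T) is an injective group homomorphism from the additive group (𝔟̄, +) into (𝒢, ∘): it is injective and satisfies exp(T + S) = exp(T) ∘ exp(S) for all T, S ∈ 𝔟̄, and its image is 𝒢̄ = {exp(T) : T ∈ 𝔟̄}. -/

import Mathlib

set_option synthInstance.maxHeartbeats 1000000
set_option maxHeartbeats 1000000

namespace CC

abbrev FockSpace (K : ℕ) := (Fin K → Bool) → ℝ

noncomputable def eVec (K : ℕ) (k : Fin K → Bool) : FockSpace K := Pi.single k 1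

def nTrue (K : ℕ) (k : Fin K → Bool) : ℕ :=
  (Finset.univ.filter fun j => k j = true).card

def sgn (K : ℕ) (i : Fin K) (k : Fin K → Bool) : ℝ :=
  (-1 : ℝ) ^ (Finset.univ.filter fun j => j < i ∧ k j = true).card

noncomputable def creOp (K : ℕ) (i : Fin K) : Module.End ℝ (FockSpace K) where
  toFun f := fun m =>
    if m i = true then
      sgn K i (Function.update m i false) * f (Function.update m i false)
    else 0
  map_add' f g := by
    funext m
    by_cases h : m i = true <;> simp [h, mul_add]
  map_smul' c f := by
    funext m
    by_cases h : m i = true <;> simp [h] <;> ring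

noncomputable def annOp (K : ℕ) (i : Fin K) : Module.End ℝ (FockSpace K) where
  toFun f := fun m =>
    if m i = true then 0
    else sgn K i m * f (Function.update m i true)
  map_add' f g := by
    funext m
    by_cases h : m i = true <;> simp [h, mul_add]
  map_smul' c f := by
    funext m
    by_cases h : m i = true <;> simp [h] <;> ring

structure ExIdx (K N : ℕ) where
  r : ℕ
  r_pos : 1 ≤ r
  r_le : r ≤ N
  occ : Fin r → Fin K
  vir : Fin r → Fin K
  occ_mono : StrictMono occ
  vir_mono : StrictMono vir
  occ_lt : ∀ j, ((occ j : Fin K) : ℕ) < N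
  vir_ge : ∀ j, N ≤ ((vir j : Fin K) : ℕ)

noncomputable def excOp (K N : ℕ) (μ : ExIdx K N) : Module.End ℝ (FockSpace K) :=
  (List.ofFn fun j => creOp K (μ.vir j)).prod *
    ((List.ofFn fun j => annOp K (μ.occ j)).reverse).prod

noncomputable def dexcOp (K N : ℕ) (μ : ExIdx K N) : Module.End ℝ (FockSpace K) :=
  (List.ofFn fun j => creOp K (μ.occ j)).prod *
    ((List.ofFn fun j => annOp K (μ.vir j)).reverse).prod

noncomputable def Hspace (K N : ℕ) : Submodule ℝ (FockSpace K) :=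
  Submodule.span ℝ {f | ∃ k : Fin K → Bool, nTrue K k = N ∧ f = eVec K k}

def refOcc (K N : ℕ) : Fin K → Bool := fun j => decide ((j : ℕ) < N)

noncomputable def refVec (K N : ℕ) : FockSpace K := eVec K (refOcc K N)

abbrev ExcInvariant (K N : ℕ) : Prop :=
  ∀ μ : ExIdx K N, ∀ x ∈ Hspace K N, excOp K N μ x ∈ Hspace K N

noncomputable def excResL (K N : ℕ) (hX : ExcInvariant K N) (μ : ExIdx K N) :
    Hspace K N →L[ℝ] Hspace K N :=
  LinearMap.toContinuousLinearMap ((excOp K N μ).restrict (hX μ))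

noncomputable def clusterSpace (K N : ℕ) (hX : ExcInvariant K N) :
    Submodule ℝ (Hspace K N →L[ℝ] Hspace K N) :=
  Submodule.span ℝ (Set.range (excResL K N hX))

noncomputable def Gset (K N : ℕ) (hX : ExcInvariant K N) :
    Set (Hspace K N →L[ℝ] Hspace K N) :=
  {G | ∃ C ∈ clusterSpace K N hX, G = 1 + C}

noncomputable def ip (K : ℕ) (f g : FockSpace K) : ℝ :=
  ∑ k : Fin K → Bool, f k * g k

lemma nTrue_refOcc (K N : ℕ) (h : N ≤ K) : nTrue K (refOcc K N) = N := by
  unfold nTrue refOcc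
  have : (Finset.univ.filter fun j : Fin K => decide ((j : ℕ) < N) = true)
      = Finset.map (Fin.castLEEmb h) Finset.univ := by
    ext j
    simp only [Finset.mem_filter, Finset.mem_univ, true_and, decide_eq_true_eq,
      Finset.mem_map, Fin.castLEEmb_apply]
    constructor
    · intro hj
      exact ⟨⟨(j : ℕ), hj⟩, by ext; simp⟩
    · rintro ⟨i, -, rfl⟩
      simpa using i.isLt
  rw [this]
  simp

lemma refVec_mem (K N : ℕ) (h : N ≤ K) : refVec K N ∈ Hspace K N :=
  Submodule.subset_span ⟨refOcc K N, nTrue_refOcc K N h, rfl⟩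

noncomputable def refState (K N : ℕ) (h : N ≤ K) : Hspace K N :=
  ⟨refVec K N, refVec_mem K N h⟩

noncomputable instance instTopRingCLM (K N : ℕ) :
    IsTopologicalRing (Hspace K N →L[ℝ] Hspace K N) := by
  exact @NonUnitalSeminormedRing.toIsTopologicalRing (Hspace K N →L[ℝ] Hspace K N) _

noncomputable def expE (K N : ℕ) (T : Hspace K N →L[ℝ] Hspace K N) :
    Hspace K N →L[ℝ] Hspace K N :=
  NormedSpace.exp T


noncomputable def truncSpace (K N : ℕ) (hX : ExcInvariant K N) (I' : Set (ExIdx K N)) :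
    Submodule ℝ (Hspace K N →L[ℝ] Hspace K N) :=
  Submodule.span ℝ (excResL K N hX '' I')

noncomputable def GsetBar (K N : ℕ) (hX : ExcInvariant K N) (I' : Set (ExIdx K N)) :
    Set (Hspace K N →L[ℝ] Hspace K N) :=
  {G | ∃ T ∈ truncSpace K N hX I', G = NormedSpace.exp T}

/-! ### Section A: sign lemmas, basis action, anticommutation -/

lemma sgn_update_of_le (K : ℕ) (i l : Fin K) (h : i ≤ l) (k : Fin K → Bool) (b : Bool) :
    sgn K i (Function.update k l b) = sgn K i k := by
  unfold sgn
  congr 2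
  ext j
  simp only [Finset.mem_filter, Finset.mem_univ, true_and]
  rcases eq_or_ne j l with rfl | hj
  · constructor <;> rintro ⟨h1, h2⟩ <;> exact absurd h1 (not_lt.mpr h)
  · rw [Function.update_of_ne hj]

lemma sgn_update_insert (K : ℕ) (i l : Fin K) (h : l < i) (k : Fin K → Bool)
    (hk : k l = false) :
    sgn K i (Function.update k l true) = -sgn K i k := by
  have hfil : (Finset.univ.filter fun j => j < i ∧ Function.update k l true j = true)
      = insert l (Finset.univ.filter fun j => j < i ∧ k j = true) := by
    ext j
    simp only [Finset.mem_filter, Finset.mem_univ, true_and, Finset.mem_insert]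
    rcases eq_or_ne j l with rfl | hj
    · simp [h]
    · rw [Function.update_of_ne hj]
      constructor
      · exact fun h2 => Or.inr h2
      · rintro (rfl | h2)
        · exact absurd rfl hj
        · exact h2
  have hl : l ∉ Finset.univ.filter fun j => j < i ∧ k j = true := by simp [hk]
  unfold sgn
  rw [hfil, Finset.card_insert_of_notMem hl, pow_succ]
  ring

lemma sgn_update_erase (K : ℕ) (i l : Fin K) (h : l < i) (k : Fin K → Bool)
    (hk : k l = true) :
    sgn K i (Function.update k l false) = -sgn K i k := by
  have h2 := sgn_update_insert K i l h (Function.update k l false) (by simp)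
  rw [Function.update_idem] at h2
  have h3 : Function.update k l true = k := by
    rw [← hk, Function.update_eq_self]
  rw [h3] at h2
  linarith

lemma creOp_apply (K : ℕ) (i : Fin K) (f : FockSpace K) (m : Fin K → Bool) :
    creOp K i f m = if m i = true then
      sgn K i (Function.update m i false) * f (Function.update m i false) else 0 := rfl

lemma annOp_apply (K : ℕ) (i : Fin K) (f : FockSpace K) (m : Fin K → Bool) :
    annOp K i f m = if m i = true then 0
      else sgn K i m * f (Function.update m i true) := rfl

lemma eVec_apply (K : ℕ) (k m : Fin K → Bool) :
    eVec K k m = if m = k then 1 else 0 := by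
  unfold eVec; rw [Pi.single_apply]

lemma creOp_eVec_true (K : ℕ) (i : Fin K) (k : Fin K → Bool) (h : k i = true) :
    creOp K i (eVec K k) = 0 := by
  funext m
  rw [creOp_apply, Pi.zero_apply]
  simp only [eVec_apply]
  by_cases hm : m i = true
  · rw [if_pos hm, if_neg, mul_zero]
    intro he
    have := congrFun he i
    simp [h] at this
  · rw [if_neg hm]

lemma creOp_eVec_false (K : ℕ) (i : Fin K) (k : Fin K → Bool) (h : k i = false) :
    creOp K i (eVec K k) = sgn K i k • eVec K (Function.update k i true) := by
  funext m
  rw [creOp_apply, Pi.smul_apply, smul_eq_mul]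
  simp only [eVec_apply]
  by_cases hm : m i = true
  · rw [if_pos hm]
    by_cases he : Function.update m i false = k
    · have hmk : m = Function.update k i true := by
        rw [← he, Function.update_idem]
        conv_lhs => rw [← Function.update_eq_self i m]
        rw [hm]
      have hsgn : sgn K i (Function.update m i false) = sgn K i k := by
        rw [he]
      rw [if_pos he, if_pos hmk, hsgn, mul_one]
    · have hmk : m ≠ Function.update k i true := by
        intro hc
        apply he
        rw [hc, Function.update_idem, ← h, Function.update_eq_self]
      rw [if_neg he, if_neg hmk, mul_zero, mul_zero]
  · have hmk : m ≠ Function.update k i true := by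
      intro hc
      apply hm
      rw [hc, Function.update_self]
    rw [if_neg hm, if_neg hmk, mul_zero]

lemma annOp_eVec_false (K : ℕ) (i : Fin K) (k : Fin K → Bool) (h : k i = false) :
    annOp K i (eVec K k) = 0 := by
  funext m
  rw [annOp_apply, Pi.zero_apply]
  simp only [eVec_apply]
  by_cases hm : m i = true
  · rw [if_pos hm]
  · rw [if_neg hm, if_neg, mul_zero]
    intro he
    have := congrFun he i
    simp [h, Function.update_self] at this

lemma annOp_eVec_true (K : ℕ) (i : Fin K) (k : Fin K → Bool) (h : k i = true) :
    annOp K i (eVec K k) = sgn K i k • eVec K (Function.update k i false) := by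
  funext m
  rw [annOp_apply, Pi.smul_apply, smul_eq_mul]
  simp only [eVec_apply]
  by_cases hm : m i = true
  · have hmk : m ≠ Function.update k i false := by
      intro hc
      rw [hc, Function.update_self] at hm
      exact absurd hm (by simp)
    rw [if_pos hm, if_neg hmk, mul_zero]
  · rw [if_neg hm]
    by_cases he : Function.update m i true = k
    · have hmk : m = Function.update k i false := by
        rw [← he, Function.update_idem]
        conv_lhs => rw [← Function.update_eq_self i m]
        congr 1
        simpa using hm
      have hsgn : sgn K i m = sgn K i k := by
        rw [← he, sgn_update_of_le K i i le_rfl]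
      rw [if_pos he, if_pos hmk, hsgn, mul_one]
    · have hmk : m ≠ Function.update k i false := by
        intro hc
        apply he
        rw [hc, Function.update_idem, ← h, Function.update_eq_self]
      rw [if_neg he, if_neg hmk, mul_zero, mul_zero]

lemma end_ext {K : ℕ} {f g : Module.End ℝ (FockSpace K)}
    (h : ∀ k, f (eVec K k) = g (eVec K k)) : f = g := by
  apply (Pi.basisFun ℝ (Fin K → Bool)).ext
  intro k
  have hb : (Pi.basisFun ℝ (Fin K → Bool)) k = eVec K k := by
    simp [eVec, Pi.basisFun_apply]
  rw [hb]
  exact h k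
/-! ### Section B: anticommutation -/

lemma creOp_mul_self (K : ℕ) (i : Fin K) : creOp K i * creOp K i = 0 := by
  apply end_ext; intro k
  rw [Module.End.mul_apply, LinearMap.zero_apply]
  by_cases h : k i = true
  · rw [creOp_eVec_true K i k h, map_zero]
  · have h' : k i = false := by simpa using h
    rw [creOp_eVec_false K i k h', map_smul,
      creOp_eVec_true K i _ (Function.update_self i true k), smul_zero]

lemma annOp_mul_self (K : ℕ) (i : Fin K) : annOp K i * annOp K i = 0 := by
  apply end_ext; intro k
  rw [Module.End.mul_apply, LinearMap.zero_apply]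
  by_cases h : k i = true
  · rw [annOp_eVec_true K i k h, map_smul,
      annOp_eVec_false K i _ (Function.update_self i false k), smul_zero]
  · have h' : k i = false := by simpa using h
    rw [annOp_eVec_false K i k h', map_zero]

lemma sgn_cc (K : ℕ) {i j : Fin K} (hij : i ≠ j) (k : Fin K → Bool)
    (hi : k i = false) (hj : k j = false) :
    sgn K j k * sgn K i (Function.update k j true)
      = -(sgn K i k * sgn K j (Function.update k i true)) := by
  rcases hij.lt_or_gt with hlt | hlt
  · rw [sgn_update_of_le K i j hlt.le, sgn_update_insert K j i hlt k hi]; ring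
  · rw [sgn_update_insert K i j hlt k hj, sgn_update_of_le K j i hlt.le]; ring

lemma sgn_aa (K : ℕ) {i j : Fin K} (hij : i ≠ j) (k : Fin K → Bool)
    (hi : k i = true) (hj : k j = true) :
    sgn K j k * sgn K i (Function.update k j false)
      = -(sgn K i k * sgn K j (Function.update k i false)) := by
  rcases hij.lt_or_gt with hlt | hlt
  · rw [sgn_update_of_le K i j hlt.le, sgn_update_erase K j i hlt k hi]; ring
  · rw [sgn_update_erase K i j hlt k hj, sgn_update_of_le K j i hlt.le]; ring

lemma sgn_ca (K : ℕ) {i j : Fin K} (hij : i ≠ j) (k : Fin K → Bool)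
    (hi : k i = false) (hj : k j = true) :
    sgn K j k * sgn K i (Function.update k j false)
      = -(sgn K i k * sgn K j (Function.update k i true)) := by
  rcases hij.lt_or_gt with hlt | hlt
  · rw [sgn_update_of_le K i j hlt.le, sgn_update_insert K j i hlt k hi]; ring
  · rw [sgn_update_erase K i j hlt k hj, sgn_update_of_le K j i hlt.le]; ring

lemma creOp_anticomm (K : ℕ) (i j : Fin K) :
    creOp K i * creOp K j = -(creOp K j * creOp K i) := by
  rcases eq_or_ne i j with rfl | hij
  · rw [creOp_mul_self, neg_zero]
  · apply end_ext; intro k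
    rw [Module.End.mul_apply, LinearMap.neg_apply, Module.End.mul_apply]
    by_cases hj : k j = true
    · rw [creOp_eVec_true K j k hj, map_zero]
      by_cases hi : k i = true
      · rw [creOp_eVec_true K i k hi, map_zero, neg_zero]
      · have hi' : k i = false := by simpa using hi
        rw [creOp_eVec_false K i k hi', map_smul,
          creOp_eVec_true K j _ (by rw [Function.update_of_ne hij.symm]; exact hj),
          smul_zero, neg_zero]
    · have hj' : k j = false := by simpa using hj
      by_cases hi : k i = true
      · rw [creOp_eVec_false K j k hj', map_smul,
          creOp_eVec_true K i _ (by rw [Function.update_of_ne hij]; exact hi),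
          smul_zero, creOp_eVec_true K i k hi, map_zero, neg_zero]
      · have hi' : k i = false := by simpa using hi
        rw [creOp_eVec_false K j k hj', map_smul,
          creOp_eVec_false K i _ (by rw [Function.update_of_ne hij]; exact hi'),
          creOp_eVec_false K i k hi', map_smul,
          creOp_eVec_false K j _ (by rw [Function.update_of_ne hij.symm]; exact hj'),
          smul_smul, smul_smul, Function.update_comm hij,
          sgn_cc K hij k hi' hj', neg_smul]

lemma annOp_anticomm (K : ℕ) (i j : Fin K) :
    annOp K i * annOp K j = -(annOp K j * annOp K i) := by
  rcases eq_or_ne i j with rfl | hij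
  · rw [annOp_mul_self, neg_zero]
  · apply end_ext; intro k
    rw [Module.End.mul_apply, LinearMap.neg_apply, Module.End.mul_apply]
    by_cases hj : k j = true
    · by_cases hi : k i = true
      · rw [annOp_eVec_true K j k hj, map_smul,
          annOp_eVec_true K i _ (by rw [Function.update_of_ne hij]; exact hi),
          annOp_eVec_true K i k hi, map_smul,
          annOp_eVec_true K j _ (by rw [Function.update_of_ne hij.symm]; exact hj),
          smul_smul, smul_smul, Function.update_comm hij,
          sgn_aa K hij k hi hj, neg_smul]
      · have hi' : k i = false := by simpa using hi
        rw [annOp_eVec_true K j k hj, map_smul,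
          annOp_eVec_false K i _ (by rw [Function.update_of_ne hij]; exact hi'),
          smul_zero, annOp_eVec_false K i k hi', map_zero, neg_zero]
    · have hj' : k j = false := by simpa using hj
      rw [annOp_eVec_false K j k hj', map_zero]
      by_cases hi : k i = true
      · rw [annOp_eVec_true K i k hi, map_smul,
          annOp_eVec_false K j _ (by rw [Function.update_of_ne hij.symm]; exact hj'),
          smul_zero, neg_zero]
      · have hi' : k i = false := by simpa using hi
        rw [annOp_eVec_false K i k hi', map_zero, neg_zero]

lemma cre_ann_anticomm (K : ℕ) {i j : Fin K} (hij : i ≠ j) :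
    creOp K i * annOp K j = -(annOp K j * creOp K i) := by
  apply end_ext; intro k
  rw [Module.End.mul_apply, LinearMap.neg_apply, Module.End.mul_apply]
  by_cases hj : k j = true
  · by_cases hi : k i = true
    · rw [annOp_eVec_true K j k hj, map_smul,
        creOp_eVec_true K i _ (by rw [Function.update_of_ne hij]; exact hi),
        smul_zero, creOp_eVec_true K i k hi, map_zero, neg_zero]
    · have hi' : k i = false := by simpa using hi
      rw [annOp_eVec_true K j k hj, map_smul,
        creOp_eVec_false K i _ (by rw [Function.update_of_ne hij]; exact hi'),
        creOp_eVec_false K i k hi', map_smul,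
        annOp_eVec_true K j _ (by rw [Function.update_of_ne hij.symm]; exact hj),
        smul_smul, smul_smul, Function.update_comm hij,
        sgn_ca K hij k hi' hj, neg_smul]
  · have hj' : k j = false := by simpa using hj
    rw [annOp_eVec_false K j k hj', map_zero]
    by_cases hi : k i = true
    · rw [creOp_eVec_true K i k hi, map_zero, neg_zero]
    · have hi' : k i = false := by simpa using hi
      rw [creOp_eVec_false K i k hi', map_smul,
        annOp_eVec_false K j _ (by rw [Function.update_of_ne hij.symm]; exact hj'),
        smul_zero, neg_zero]
/-! ### Section C: list product machinery -/

section Lists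

variable {A : Type*} [Ring A] [Algebra ℝ A]

lemma anticomm_symm {x y : A} (h : x * y = -(y * x)) : y * x = -(x * y) := by
  rw [h, neg_neg]

lemma mul_list_prod_anticomm (x : A) (L : List A)
    (h : ∀ b ∈ L, x * b = -(b * x)) :
    x * L.prod = ((-1 : ℝ) ^ L.length) • (L.prod * x) := by
  induction L with
  | nil => simp
  | cons b L ih =>
    have hx := ih (fun c hc => h c (List.mem_cons_of_mem _ hc))
    calc x * (b :: L).prod = (x * b) * L.prod := by rw [List.prod_cons, mul_assoc]
      _ = -(b * (x * L.prod)) := by rw [h b List.mem_cons_self, neg_mul, mul_assoc]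
      _ = -(b * (((-1:ℝ) ^ L.length) • (L.prod * x))) := by rw [hx]
      _ = ((-1:ℝ) ^ (b :: L).length) • ((b :: L).prod * x) := by
          rw [mul_smul_comm, ← neg_smul, List.length_cons, pow_succ, mul_neg_one,
            List.prod_cons, mul_assoc]

lemma prod_mul_prod_anticomm (L1 L2 : List A)
    (h : ∀ a ∈ L1, ∀ b ∈ L2, a * b = -(b * a)) :
    L1.prod * L2.prod = ((-1:ℝ) ^ (L1.length * L2.length)) • (L2.prod * L1.prod) := by
  induction L1 with
  | nil => simp
  | cons a L1 ih =>
    have ih' := ih (fun c hc => h c (List.mem_cons_of_mem _ hc))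
    have hexp : L1.length * L2.length + L2.length = (a :: L1).length * L2.length := by
      simp [List.length_cons]; ring
    calc (a :: L1).prod * L2.prod = a * (L1.prod * L2.prod) := by
          rw [List.prod_cons, mul_assoc]
      _ = ((-1:ℝ) ^ (L1.length * L2.length)) • ((a * L2.prod) * L1.prod) := by
          rw [ih', mul_smul_comm, mul_assoc]
      _ = ((-1:ℝ) ^ (L1.length * L2.length)) •
            ((((-1:ℝ) ^ L2.length) • (L2.prod * a)) * L1.prod) := by
          rw [mul_list_prod_anticomm a L2 (h a List.mem_cons_self)]
      _ = ((-1:ℝ) ^ (L1.length * L2.length) * ((-1:ℝ) ^ L2.length)) •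
            (L2.prod * (a :: L1).prod) := by
          rw [smul_mul_assoc, smul_smul, List.prod_cons, mul_assoc]
      _ = ((-1:ℝ) ^ ((a :: L1).length * L2.length)) • (L2.prod * (a :: L1).prod) := by
          rw [← pow_add, hexp]

variable {ι : Type*} [DecidableEq ι]

lemma perm_scalar (g : ι → A) (hg : ∀ i j, g i * g j = -(g j * g i))
    {l1 l2 : List ι} (hp : l1.Perm l2) :
    ∃ s : ℝ, (l1.map g).prod = s • (l2.map g).prod := by
  induction hp with
  | nil => exact ⟨1, by simp⟩
  | cons x _ ih =>
    obtain ⟨s, hs⟩ := ih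
    exact ⟨s, by simp only [List.map_cons, List.prod_cons, hs, mul_smul_comm]⟩
  | swap x y l =>
    refine ⟨-1, ?_⟩
    simp only [List.map_cons, List.prod_cons]
    rw [← mul_assoc, hg y x, neg_mul, mul_assoc, neg_one_smul]
  | trans _ _ ih1 ih2 =>
    obtain ⟨s1, hs1⟩ := ih1
    obtain ⟨s2, hs2⟩ := ih2
    exact ⟨s1 * s2, by rw [hs1, hs2, smul_smul]⟩

lemma dup_zero (g : ι → A) (hg : ∀ i j, g i * g j = -(g j * g i))
    (hsq : ∀ i, g i * g i = 0) (l : List ι) (hnd : ¬ l.Nodup) :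
    (l.map g).prod = 0 := by
  obtain ⟨x, hx⟩ := List.exists_duplicate_iff_not_nodup.2 hnd
  have hx1 : x ∈ l := hx.mem
  have hx2 : x ∈ l.erase x := by
    rw [← List.count_pos_iff, List.count_erase_self]
    have := List.duplicate_iff_two_le_count.1 hx
    omega
  have hperm : l.Perm (x :: x :: (l.erase x).erase x) :=
    (List.perm_cons_erase hx1).trans ((List.perm_cons_erase hx2).cons x)
  obtain ⟨s, hs⟩ := perm_scalar g hg hperm
  rw [hs]
  simp only [List.map_cons, List.prod_cons]
  rw [← mul_assoc, hsq x, zero_mul, smul_zero]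

end Lists

lemma exists_sorted_rep (K n : ℕ) (l : List (Fin K)) (hnd : l.Nodup)
    (hn : l.length = n) :
    ∃ f : Fin n → Fin K, StrictMono f ∧ (∀ j, f j ∈ l) ∧ (List.ofFn f).Perm l := by
  have hc : l.toFinset.card = n := by rw [List.toFinset_card_of_nodup hnd, hn]
  refine ⟨l.toFinset.orderEmbOfFin hc, (l.toFinset.orderEmbOfFin hc).strictMono, ?_, ?_⟩
  · intro j
    have h2 := Finset.orderEmbOfFin_mem l.toFinset hc j
    rwa [List.mem_toFinset] at h2
  · have hofn : List.ofFn (fun j => l.toFinset.orderEmbOfFin hc j)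
        = l.toFinset.sort (· ≤ ·) := by
      apply List.ext_getElem
      · simp [Finset.length_sort, hc]
      · intro m h1 h2
        rw [List.getElem_ofFn, Finset.orderEmbOfFin_apply]
        rfl
    rw [hofn]
    apply List.perm_of_nodup_nodup_toFinset_eq (Finset.sort_nodup _ _) hnd
    rw [Finset.sort_toFinset]
/-! ### Section D: excitation operator algebra -/

lemma excOp_eq_prod (K N : ℕ) (μ : ExIdx K N) :
    excOp K N μ = ((List.ofFn μ.vir).map (creOp K)).prod *
      (((List.ofFn μ.occ).reverse).map (annOp K)).prod := by
  unfold excOp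
  rw [List.map_ofFn, List.map_reverse, List.map_ofFn]
  rfl

lemma mem_occ_rev (K N : ℕ) (μ : ExIdx K N) {x : Fin K}
    (hx : x ∈ (List.ofFn μ.occ).reverse) : (x : ℕ) < N := by
  rw [List.mem_reverse, List.mem_ofFn] at hx
  obtain ⟨p, rfl⟩ := hx
  exact μ.occ_lt p

lemma mem_vir_ofFn (K N : ℕ) (μ : ExIdx K N) {x : Fin K}
    (hx : x ∈ List.ofFn μ.vir) : N ≤ (x : ℕ) := by
  rw [List.mem_ofFn] at hx
  obtain ⟨p, rfl⟩ := hx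
  exact μ.vir_ge p

lemma excOp_opList (K N : ℕ) (μ : ExIdx K N) :
    excOp K N μ = (((List.ofFn μ.vir).map (creOp K)) ++
      (((List.ofFn μ.occ).reverse).map (annOp K))).prod := by
  rw [excOp_eq_prod, List.prod_append]

lemma opList_anticomm (K N : ℕ) (μ ν : ExIdx K N) :
    ∀ a ∈ (((List.ofFn μ.vir).map (creOp K)) ++
      (((List.ofFn μ.occ).reverse).map (annOp K))),
    ∀ b ∈ (((List.ofFn ν.vir).map (creOp K)) ++
      (((List.ofFn ν.occ).reverse).map (annOp K))),
    a * b = -(b * a) := by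
  intro a ha b hb
  rcases List.mem_append.1 ha with ha | ha <;>
    rcases List.mem_append.1 hb with hb | hb <;>
    obtain ⟨i, hi, rfl⟩ := List.mem_map.1 ha <;>
    obtain ⟨j, hj, rfl⟩ := List.mem_map.1 hb
  · exact creOp_anticomm K i j
  · exact cre_ann_anticomm K (Fin.ne_of_val_ne
      (by have := mem_vir_ofFn K N μ hi; have := mem_occ_rev K N ν hj; omega))
  · exact anticomm_symm (cre_ann_anticomm K (Fin.ne_of_val_ne
      (by have := mem_vir_ofFn K N ν hj; have := mem_occ_rev K N μ hi; omega)))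
  · exact annOp_anticomm K i j

lemma excOp_commute (K N : ℕ) (μ ν : ExIdx K N) :
    Commute (excOp K N μ) (excOp K N ν) := by
  show excOp K N μ * excOp K N ν = excOp K N ν * excOp K N μ
  rw [excOp_opList K N μ, excOp_opList K N ν,
    prod_mul_prod_anticomm _ _ (opList_anticomm K N μ ν)]
  have heven : Even ((((List.ofFn μ.vir).map (creOp K)) ++
      (((List.ofFn μ.occ).reverse).map (annOp K))).length) := by
    simp only [List.length_append, List.length_map, List.length_reverse, List.length_ofFn]
    exact ⟨μ.r, rfl⟩
  rw [Even.neg_one_pow (heven.mul_right _), one_smul]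

lemma excOp_mul_reduce (K N : ℕ) (hNK : N ≤ K) (μ ν : ExIdx K N) :
    excOp K N μ * excOp K N ν = 0 ∨
      ∃ (ρ : ExIdx K N) (s : ℝ), excOp K N μ * excOp K N ν = s • excOp K N ρ := by
  have hcre : ∀ i j : Fin K, creOp K i * creOp K j = -(creOp K j * creOp K i) :=
    creOp_anticomm K
  have hann : ∀ i j : Fin K, annOp K i * annOp K j = -(annOp K j * annOp K i) :=
    annOp_anticomm K
  set vl : List (Fin K) := List.ofFn μ.vir ++ List.ofFn ν.vir with hvl
  set ol : List (Fin K) := (List.ofFn μ.occ).reverse ++ (List.ofFn ν.occ).reverse with hol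
  obtain ⟨sc, hsc⟩ : ∃ sc : ℝ,
      (((List.ofFn μ.occ).reverse).map (annOp K)).prod *
        ((List.ofFn ν.vir).map (creOp K)).prod
      = sc • (((List.ofFn ν.vir).map (creOp K)).prod *
        (((List.ofFn μ.occ).reverse).map (annOp K)).prod) := by
    refine ⟨_, prod_mul_prod_anticomm _ _ ?_⟩
    intro a ha b hb
    obtain ⟨i, hi, rfl⟩ := List.mem_map.1 ha
    obtain ⟨j, hj, rfl⟩ := List.mem_map.1 hb
    exact anticomm_symm (cre_ann_anticomm K (Fin.ne_of_val_ne
      (by have := mem_vir_ofFn K N ν hj; have := mem_occ_rev K N μ hi; omega)))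
  have hmain : excOp K N μ * excOp K N ν
      = sc • ((vl.map (creOp K)).prod * (ol.map (annOp K)).prod) := by
    rw [excOp_eq_prod K N μ, excOp_eq_prod K N ν, hvl, hol,
      List.map_append, List.map_append, List.prod_append, List.prod_append]
    rw [mul_assoc, ← mul_assoc (((List.ofFn μ.occ).reverse).map (annOp K)).prod, hsc,
      smul_mul_assoc, mul_smul_comm]
    congr 1
  by_cases hv : vl.Nodup
  · by_cases ho : ol.Nodup
    · -- merge case
      have hvlen : vl.length = μ.r + ν.r := by simp [hvl]
      have holen : ol.length = μ.r + ν.r := by simp [hol]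
      obtain ⟨fv, hfvm, hfvmem, hfvperm⟩ := exists_sorted_rep K (μ.r + ν.r) vl hv hvlen
      obtain ⟨fo, hfom, hfomem, hfoperm⟩ := exists_sorted_rep K (μ.r + ν.r) ol ho holen
      have hocc_lt : ∀ x ∈ ol, (x : ℕ) < N := by
        intro x hx
        rcases List.mem_append.1 hx with hx | hx
        · exact mem_occ_rev K N μ hx
        · exact mem_occ_rev K N ν hx
      have hvir_ge : ∀ x ∈ vl, N ≤ (x : ℕ) := by
        intro x hx
        rcases List.mem_append.1 hx with hx | hx
        · exact mem_vir_ofFn K N μ hx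
        · exact mem_vir_ofFn K N ν hx
      have hr_le : μ.r + ν.r ≤ N := by
        have hcard2 : (Finset.univ.filter fun j : Fin K => (j : ℕ) < N).card = N := by
          have h0 := nTrue_refOcc K N hNK
          unfold nTrue refOcc at h0
          simpa using h0
        have hsub : ol.toFinset ⊆ Finset.univ.filter fun j : Fin K => (j : ℕ) < N := by
          intro x hx
          simp only [Finset.mem_filter, Finset.mem_univ, true_and]
          exact hocc_lt x (List.mem_toFinset.1 hx)
        have hle := Finset.card_le_card hsub
        rw [List.toFinset_card_of_nodup ho, holen, hcard2] at hle
        exact hle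
      have hr_pos : 1 ≤ μ.r + ν.r := by have := μ.r_pos; omega
      refine Or.inr ⟨⟨μ.r + ν.r, hr_pos, hr_le, fo, fv, hfom, hfvm,
        fun j => hocc_lt _ (hfomem j), fun j => hvir_ge _ (hfvmem j)⟩, ?_⟩
      obtain ⟨s1, hs1⟩ := perm_scalar (creOp K) hcre hfvperm.symm
      obtain ⟨s2, hs2⟩ := perm_scalar (annOp K) hann
        (hfoperm.symm.trans (List.reverse_perm (List.ofFn fo)).symm)
      refine ⟨sc * (s1 * s2), ?_⟩
      rw [hmain, hs1, hs2, excOp_eq_prod]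
      rw [smul_mul_assoc, mul_smul_comm, smul_smul, smul_smul, mul_assoc]
    · left
      rw [hmain, dup_zero (annOp K) hann (annOp_mul_self K) ol ho, mul_zero, smul_zero]
  · left
    rw [hmain, dup_zero (creOp K) hcre (creOp_mul_self K) vl hv, zero_mul, smul_zero]
/-! ### Section E: restriction to the N-particle space, cluster space closure -/

noncomputable local instance (K N : ℕ) :
    Distrib (Hspace K N →L[ℝ] Hspace K N) := inferInstance

local instance (K N : ℕ) :
    SMulCommClass ℝ (Hspace K N →L[ℝ] Hspace K N) (Hspace K N →L[ℝ] Hspace K N) :=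
  ⟨fun s a b => by
    ext x
    simp only [smul_eq_mul, ContinuousLinearMap.smul_apply, ContinuousLinearMap.mul_apply,
      map_smul]⟩

local instance (K N : ℕ) :
    IsScalarTower ℝ (Hspace K N →L[ℝ] Hspace K N) (Hspace K N →L[ℝ] Hspace K N) :=
  ⟨fun s a b => by
    ext x
    simp only [smul_eq_mul, ContinuousLinearMap.smul_apply, ContinuousLinearMap.mul_apply]⟩


lemma excResL_coe (K N : ℕ) (hX : ExcInvariant K N) (μ : ExIdx K N) (x : Hspace K N) :
    (excResL K N hX μ x : FockSpace K) = excOp K N μ (x : FockSpace K) := rfl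

lemma excResL_commute (K N : ℕ) (hX : ExcInvariant K N) (μ ν : ExIdx K N) :
    Commute (excResL K N hX μ) (excResL K N hX ν) := by
  show _ = _
  refine ContinuousLinearMap.ext fun x => Subtype.ext ?_
  show (excResL K N hX μ (excResL K N hX ν x) : FockSpace K)
      = (excResL K N hX ν (excResL K N hX μ x) : FockSpace K)
  rw [excResL_coe, excResL_coe, excResL_coe, excResL_coe,
    ← Module.End.mul_apply, ← Module.End.mul_apply, excOp_commute K N μ ν]

lemma excResL_mul_smul (K N : ℕ) (hX : ExcInvariant K N) {μ ν ρ : ExIdx K N} {s : ℝ}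
    (h : excOp K N μ * excOp K N ν = s • excOp K N ρ) :
    excResL K N hX μ * excResL K N hX ν = s • excResL K N hX ρ := by
  refine ContinuousLinearMap.ext fun x => Subtype.ext ?_
  show (excResL K N hX μ (excResL K N hX ν x) : FockSpace K)
      = ((s • excResL K N hX ρ x : Hspace K N) : FockSpace K)
  rw [excResL_coe, excResL_coe]
  have := DFunLike.congr_fun h (x : FockSpace K)
  rw [Module.End.mul_apply] at this
  rw [this]
  rfl

lemma excResL_mul_zero (K N : ℕ) (hX : ExcInvariant K N) {μ ν : ExIdx K N}
    (h : excOp K N μ * excOp K N ν = 0) :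
    excResL K N hX μ * excResL K N hX ν = 0 := by
  refine ContinuousLinearMap.ext fun x => Subtype.ext ?_
  show (excResL K N hX μ (excResL K N hX ν x) : FockSpace K) = (0 : FockSpace K)
  rw [excResL_coe, excResL_coe]
  have := DFunLike.congr_fun h (x : FockSpace K)
  rw [Module.End.mul_apply] at this
  rw [this]
  rfl

lemma clusterSpace_mul_mem (K N : ℕ) (hNK : N ≤ K) (hX : ExcInvariant K N)
    {T S : Hspace K N →L[ℝ] Hspace K N}
    (hT : T ∈ clusterSpace K N hX) (hS : S ∈ clusterSpace K N hX) :
    T * S ∈ clusterSpace K N hX := by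
  induction hT using Submodule.span_induction with
  | mem T hTgen =>
    obtain ⟨μ, rfl⟩ := hTgen
    induction hS using Submodule.span_induction with
    | mem S hSgen =>
      obtain ⟨ν, rfl⟩ := hSgen
      rcases excOp_mul_reduce K N hNK μ ν with h0 | ⟨ρ, s, hs⟩
      · rw [excResL_mul_zero K N hX h0]
        exact Submodule.zero_mem _
      · rw [excResL_mul_smul K N hX hs]
        exact Submodule.smul_mem _ _ (Submodule.subset_span ⟨ρ, rfl⟩)
    | zero =>
      rw [mul_zero]; exact Submodule.zero_mem _
    | add x y hx hy ihx ihy =>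
      rw [mul_add]; exact Submodule.add_mem _ ihx ihy
    | smul a x hx ihx =>
      rw [mul_smul_comm]; exact Submodule.smul_mem _ _ ihx
  | zero =>
    rw [zero_mul]; exact Submodule.zero_mem _
  | add x y hx hy ihx ihy =>
    rw [add_mul]; exact Submodule.add_mem _ ihx ihy
  | smul a x hx ihx =>
    rw [smul_mul_assoc]; exact Submodule.smul_mem _ _ ihx

lemma clusterSpace_commute (K N : ℕ) (hX : ExcInvariant K N)
    {T S : Hspace K N →L[ℝ] Hspace K N}
    (hT : T ∈ clusterSpace K N hX) (hS : S ∈ clusterSpace K N hX) :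
    Commute T S := by
  induction hT using Submodule.span_induction with
  | mem T hTgen =>
    obtain ⟨μ, rfl⟩ := hTgen
    induction hS using Submodule.span_induction with
    | mem S hSgen =>
      obtain ⟨ν, rfl⟩ := hSgen
      exact excResL_commute K N hX μ ν
    | zero => exact Commute.zero_right _
    | add x y hx hy ihx ihy => exact ihx.add_right ihy
    | smul a x hx ihx => exact ihx.smul_right a
  | zero => exact Commute.zero_left _
  | add x y hx hy ihx ihy => exact ihx.add_left ihy
  | smul a x hx ihx => exact ihx.smul_left a
/-! ### Section F: level filtration and nilpotency -/

def lvl (K N : ℕ) (k : Fin K → Bool) : ℕ :=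
  (Finset.univ.filter fun j : Fin K => N ≤ (j : ℕ) ∧ k j = true).card

lemma lvl_le_nTrue (K N : ℕ) (k : Fin K → Bool) : lvl K N k ≤ nTrue K k := by
  apply Finset.card_le_card
  intro j hj
  simp only [Finset.mem_filter, Finset.mem_univ, true_and] at hj ⊢
  exact hj.2

lemma nTrue_update_true (K : ℕ) (k : Fin K → Bool) (i : Fin K) (h : k i = false) :
    nTrue K (Function.update k i true) = nTrue K k + 1 := by
  unfold nTrue
  have hfil : (Finset.univ.filter fun j => Function.update k i true j = true)
      = insert i (Finset.univ.filter fun j => k j = true) := by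
    ext j
    simp only [Finset.mem_filter, Finset.mem_univ, true_and, Finset.mem_insert]
    rcases eq_or_ne j i with rfl | hj
    · simp
    · rw [Function.update_of_ne hj]
      constructor
      · exact fun h2 => Or.inr h2
      · rintro (rfl | h2)
        · exact absurd rfl hj
        · exact h2
  have hi : i ∉ Finset.univ.filter fun j => k j = true := by simp [h]
  rw [hfil, Finset.card_insert_of_notMem hi]

lemma nTrue_update_false (K : ℕ) (k : Fin K → Bool) (i : Fin K) (h : k i = true) :
    nTrue K (Function.update k i false) + 1 = nTrue K k := by
  have h2 := nTrue_update_true K (Function.update k i false) i (by simp)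
  rw [Function.update_idem] at h2
  have h3 : Function.update k i true = k := by rw [← h, Function.update_eq_self]
  rw [h3] at h2
  omega

lemma lvl_update_low (K N : ℕ) (k : Fin K → Bool) (i : Fin K) (h : (i : ℕ) < N) (b : Bool) :
    lvl K N (Function.update k i b) = lvl K N k := by
  unfold lvl
  congr 1
  ext j
  simp only [Finset.mem_filter, Finset.mem_univ, true_and]
  rcases eq_or_ne j i with rfl | hj
  · constructor <;> rintro ⟨h1, h2⟩ <;> omega
  · rw [Function.update_of_ne hj]

lemma lvl_update_true_high (K N : ℕ) (k : Fin K → Bool) (i : Fin K) (h : N ≤ (i : ℕ))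
    (hk : k i = false) :
    lvl K N (Function.update k i true) = lvl K N k + 1 := by
  unfold lvl
  have hfil : (Finset.univ.filter fun j : Fin K => N ≤ (j : ℕ) ∧ Function.update k i true j = true)
      = insert i (Finset.univ.filter fun j : Fin K => N ≤ (j : ℕ) ∧ k j = true) := by
    ext j
    simp only [Finset.mem_filter, Finset.mem_univ, true_and, Finset.mem_insert]
    rcases eq_or_ne j i with rfl | hj
    · simp [h]
    · rw [Function.update_of_ne hj]
      constructor
      · exact fun h2 => Or.inr h2
      · rintro (rfl | h2)
        · exact absurd rfl hj
        · exact h2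
  have hi : i ∉ Finset.univ.filter fun j : Fin K => N ≤ (j : ℕ) ∧ k j = true := by simp [hk]
  rw [hfil, Finset.card_insert_of_notMem hi]

noncomputable def Qsp (K N n ℓ : ℕ) : Submodule ℝ (FockSpace K) :=
  Submodule.span ℝ {f | ∃ k, nTrue K k = n ∧ lvl K N k = ℓ ∧ f = eVec K k}

noncomputable def Wsp (K N m : ℕ) : Submodule ℝ (FockSpace K) :=
  Submodule.span ℝ {f | ∃ k, nTrue K k = N ∧ m ≤ lvl K N k ∧ f = eVec K k}

lemma annOp_mem_Q (K N : ℕ) (i : Fin K) (hi : (i : ℕ) < N) (n ℓ : ℕ) :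
    ∀ x ∈ Qsp K N n ℓ, annOp K i x ∈ Qsp K N (n - 1) ℓ := by
  intro x hx
  induction hx using Submodule.span_induction with
  | mem f hf =>
    obtain ⟨k, h1, h2, rfl⟩ := hf
    by_cases hk : k i = true
    · rw [annOp_eVec_true K i k hk]
      refine Submodule.smul_mem _ _ (Submodule.subset_span ⟨Function.update k i false, ?_, ?_, rfl⟩)
      · have := nTrue_update_false K k i hk; omega
      · rw [lvl_update_low K N k i hi, h2]
    · have hk' : k i = false := by simpa using hk
      rw [annOp_eVec_false K i k hk']
      exact Submodule.zero_mem _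
  | zero => rw [map_zero]; exact Submodule.zero_mem _
  | add a b ha hb iha ihb => rw [map_add]; exact Submodule.add_mem _ iha ihb
  | smul c a ha iha => rw [map_smul]; exact Submodule.smul_mem _ _ iha

lemma creOp_mem_Q (K N : ℕ) (i : Fin K) (hi : N ≤ (i : ℕ)) (n ℓ : ℕ) :
    ∀ x ∈ Qsp K N n ℓ, creOp K i x ∈ Qsp K N (n + 1) (ℓ + 1) := by
  intro x hx
  induction hx using Submodule.span_induction with
  | mem f hf =>
    obtain ⟨k, h1, h2, rfl⟩ := hf
    by_cases hk : k i = true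
    · rw [creOp_eVec_true K i k hk]
      exact Submodule.zero_mem _
    · have hk' : k i = false := by simpa using hk
      rw [creOp_eVec_false K i k hk']
      refine Submodule.smul_mem _ _ (Submodule.subset_span ⟨Function.update k i true, ?_, ?_, rfl⟩)
      · rw [nTrue_update_true K k i hk', h1]
      · rw [lvl_update_true_high K N k i hi hk', h2]
  | zero => rw [map_zero]; exact Submodule.zero_mem _
  | add a b ha hb iha ihb => rw [map_add]; exact Submodule.add_mem _ iha ihb
  | smul c a ha iha => rw [map_smul]; exact Submodule.smul_mem _ _ iha

lemma ann_list_mem_Q (K N : ℕ) (l : List (Fin K)) (hl : ∀ i ∈ l, (i : ℕ) < N) :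
    ∀ n ℓ : ℕ, ∀ x ∈ Qsp K N n ℓ, (l.map (annOp K)).prod x ∈ Qsp K N (n - l.length) ℓ := by
  induction l with
  | nil => intro n ℓ x hx; simpa using hx
  | cons a l ih =>
    intro n ℓ x hx
    rw [List.map_cons, List.prod_cons, Module.End.mul_apply]
    have h1 := ih (fun i hi => hl i (List.mem_cons_of_mem _ hi)) n ℓ x hx
    have h2 := annOp_mem_Q K N a (hl a List.mem_cons_self) _ _ _ h1
    have : n - l.length - 1 = n - (a :: l).length := by simp [List.length_cons]; omega
    rwa [this] at h2

lemma cre_list_mem_Q (K N : ℕ) (l : List (Fin K)) (hl : ∀ i ∈ l, N ≤ (i : ℕ)) :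
    ∀ n ℓ : ℕ, ∀ x ∈ Qsp K N n ℓ, (l.map (creOp K)).prod x ∈ Qsp K N (n + l.length) (ℓ + l.length) := by
  induction l with
  | nil => intro n ℓ x hx; simpa using hx
  | cons a l ih =>
    intro n ℓ x hx
    rw [List.map_cons, List.prod_cons, Module.End.mul_apply]
    have h1 := ih (fun i hi => hl i (List.mem_cons_of_mem _ hi)) n ℓ x hx
    have h2 := creOp_mem_Q K N a (hl a List.mem_cons_self) _ _ _ h1
    have he1 : n + l.length + 1 = n + (a :: l).length := by simp [List.length_cons]; omega
    have he2 : ℓ + l.length + 1 = ℓ + (a :: l).length := by simp [List.length_cons]; omega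
    rwa [he1, he2] at h2

lemma excOp_mem_Q (K N : ℕ) (μ : ExIdx K N) (ℓ : ℕ) (x : FockSpace K)
    (hx : x ∈ Qsp K N N ℓ) : excOp K N μ x ∈ Qsp K N N (ℓ + μ.r) := by
  rw [excOp_eq_prod, Module.End.mul_apply]
  have hlen1 : ((List.ofFn μ.occ).reverse).length = μ.r := by simp
  have hlen2 : (List.ofFn μ.vir).length = μ.r := by simp
  have h1 := ann_list_mem_Q K N ((List.ofFn μ.occ).reverse) (fun i hi => mem_occ_rev K N μ hi)
    N ℓ x hx
  rw [hlen1] at h1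
  have h2 := cre_list_mem_Q K N (List.ofFn μ.vir) (fun i hi => mem_vir_ofFn K N μ hi)
    (N - μ.r) ℓ _ h1
  rw [hlen2] at h2
  have he : N - μ.r + μ.r = N := by have := μ.r_le; omega
  rwa [he] at h2

lemma Q_le_W (K N ℓ m : ℕ) (h : m ≤ ℓ) : Qsp K N N ℓ ≤ Wsp K N m := by
  apply Submodule.span_le.2
  rintro f ⟨k, h1, h2, rfl⟩
  exact Submodule.subset_span ⟨k, h1, h2 ▸ h, rfl⟩

lemma excOp_mem_W (K N : ℕ) (μ : ExIdx K N) (m : ℕ) :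
    ∀ x ∈ Wsp K N m, excOp K N μ x ∈ Wsp K N (m + 1) := by
  intro x hx
  induction hx using Submodule.span_induction with
  | mem f hf =>
    obtain ⟨k, h1, h2, rfl⟩ := hf
    have hq : eVec K k ∈ Qsp K N N (lvl K N k) := Submodule.subset_span ⟨k, h1, rfl, rfl⟩
    have := excOp_mem_Q K N μ (lvl K N k) _ hq
    exact Q_le_W K N _ (m + 1) (by have := μ.r_pos; omega) this
  | zero => rw [map_zero]; exact Submodule.zero_mem _
  | add a b ha hb iha ihb => rw [map_add]; exact Submodule.add_mem _ iha ihb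
  | smul c a ha iha => rw [map_smul]; exact Submodule.smul_mem _ _ iha

lemma Hspace_le_W0 (K N : ℕ) : Hspace K N ≤ Wsp K N 0 := by
  apply Submodule.span_le.2
  rintro f ⟨k, h1, rfl⟩
  exact Submodule.subset_span ⟨k, h1, Nat.zero_le _, rfl⟩

lemma Wsp_succN_eq_bot (K N : ℕ) : Wsp K N (N + 1) = ⊥ := by
  rw [Wsp, Submodule.span_eq_bot]
  rintro f ⟨k, h1, h2, rfl⟩
  have := lvl_le_nTrue K N k
  omega

/-- The filtration on the restricted space. -/
noncomputable def WH (K N m : ℕ) : Submodule ℝ (Hspace K N) :=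
  (Wsp K N m).comap (Hspace K N).subtype

lemma cluster_raises (K N : ℕ) (hX : ExcInvariant K N)
    {T : Hspace K N →L[ℝ] Hspace K N} (hT : T ∈ clusterSpace K N hX) :
    ∀ m : ℕ, ∀ x ∈ WH K N m, T x ∈ WH K N (m + 1) := by
  induction hT using Submodule.span_induction with
  | mem f hf =>
    obtain ⟨μ, rfl⟩ := hf
    intro m x hx
    simp only [WH, Submodule.mem_comap, Submodule.coe_subtype] at hx ⊢
    rw [excResL_coe]
    exact excOp_mem_W K N μ m _ hx
  | zero => intro m x hx; rw [ContinuousLinearMap.zero_apply]; exact Submodule.zero_mem _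
  | add a b ha hb iha ihb =>
    intro m x hx
    rw [ContinuousLinearMap.add_apply]
    exact Submodule.add_mem _ (iha m x hx) (ihb m x hx)
  | smul c a ha iha =>
    intro m x hx
    rw [ContinuousLinearMap.smul_apply]
    exact Submodule.smul_mem _ _ (iha m x hx)

lemma cluster_nilpotent (K N : ℕ) (hX : ExcInvariant K N)
    {T : Hspace K N →L[ℝ] Hspace K N} (hT : T ∈ clusterSpace K N hX) :
    T ^ (N + 1) = 0 := by
  have hpow : ∀ j : ℕ, ∀ x : Hspace K N, (T ^ j) x ∈ WH K N j := by
    intro j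
    induction j with
    | zero =>
      intro x
      rw [pow_zero, ContinuousLinearMap.one_apply]
      exact Hspace_le_W0 K N x.2
    | succ j ih =>
      intro x
      rw [pow_succ']
      exact cluster_raises K N hX hT j _ (ih x)
  refine ContinuousLinearMap.ext fun x => Subtype.ext ?_
  have := hpow (N + 1) x
  rw [WH, Wsp_succN_eq_bot] at this
  simp only [Submodule.mem_comap, Submodule.coe_subtype, Submodule.mem_bot] at this
  rw [ContinuousLinearMap.zero_apply, ZeroMemClass.coe_zero]
  exact this
/-! ### Section G: exponential lemmas and the main theorem -/

noncomputable local instance (K N : ℕ) :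
    NormedRing (Hspace K N →L[ℝ] Hspace K N) := inferInstance

noncomputable local instance (K N : ℕ) :
    NormedAlgebra ℝ (Hspace K N →L[ℝ] Hspace K N) := inferInstance

noncomputable local instance (K N : ℕ) :
    CompleteSpace (Hspace K N →L[ℝ] Hspace K N) := inferInstance

noncomputable local instance (K N : ℕ) :
    NormedAlgebra ℚ (Hspace K N →L[ℝ] Hspace K N) := NormedAlgebra.restrictScalars ℚ ℝ _

lemma exp_eq_sum_of_pow_eq_zero (K N : ℕ) (T : Hspace K N →L[ℝ] Hspace K N) (M : ℕ)
    (hM : T ^ M = 0) :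
    NormedSpace.exp T = ∑ n ∈ Finset.range M, ((n.factorial : ℝ))⁻¹ • T ^ n := by
  rw [NormedSpace.exp_eq_tsum ℝ]
  apply tsum_eq_sum
  intro n hn
  have hMn : M ≤ n := by simpa using hn
  rw [show n = M + (n - M) by omega, pow_add, hM, zero_mul, smul_zero]

lemma exp_eq_one_nilpotent (K N : ℕ) (hN : 0 < N) (T : Hspace K N →L[ℝ] Hspace K N)
    (hnil : T ^ (N + 1) = 0) (h1 : NormedSpace.exp T = 1) : T = 0 := by
  have hsum : ∑ n ∈ Finset.range (N + 1), ((n.factorial : ℝ))⁻¹ • T ^ n = 1 := by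
    rw [← exp_eq_sum_of_pow_eq_zero K N T (N + 1) hnil]
    exact h1
  rw [Finset.range_eq_Ico, Finset.sum_eq_sum_Ico_succ_bot (by omega : 0 < N + 1)] at hsum
  have h00 : ((Nat.factorial 0 : ℝ))⁻¹ • T ^ 0 = 1 := by simp [Nat.factorial]
  rw [h00] at hsum
  have hE : ∑ n ∈ Finset.Ico 1 (N + 1), ((n.factorial : ℝ))⁻¹ • T ^ n = 0 := by
    have := hsum
    rwa [add_eq_left] at this
  rw [Finset.sum_eq_sum_Ico_succ_bot (by omega : 1 < N + 1)] at hE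
  have h11 : ((Nat.factorial 1 : ℝ))⁻¹ • T ^ 1 = T := by simp [Nat.factorial]
  rw [h11] at hE
  have hT : T = -∑ n ∈ Finset.Ico 2 (N + 1), ((n.factorial : ℝ))⁻¹ • T ^ n :=
    eq_neg_of_add_eq_zero_left hE
  have main : ∀ d m : ℕ, 1 ≤ m → N + 1 ≤ m + d → T ^ m = 0 := by
    intro d
    induction d with
    | zero =>
      intro m h1m hMm
      rw [show m = (N + 1) + (m - (N + 1)) by omega, pow_add, hnil, zero_mul]
    | succ d ih =>
      intro m h1m hMm
      by_cases hc : N + 1 ≤ m + d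
      · exact ih m h1m hc
      · obtain ⟨m', rfl⟩ : ∃ m', m = m' + 1 := ⟨m - 1, by omega⟩
        calc T ^ (m' + 1) = T ^ m' * T := pow_succ T m'
          _ = T ^ m' * (-∑ n ∈ Finset.Ico 2 (N + 1), ((n.factorial : ℝ))⁻¹ • T ^ n) := by
              rw [← hT]
          _ = -∑ n ∈ Finset.Ico 2 (N + 1), ((n.factorial : ℝ))⁻¹ • (T ^ m' * T ^ n) := by
              rw [mul_neg, Finset.mul_sum]
              congr 1
              refine Finset.sum_congr rfl fun n _ => ?_
              rw [mul_smul_comm]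
          _ = 0 := by
              rw [neg_eq_zero]
              refine Finset.sum_eq_zero fun n hn => ?_
              have hn2 : 2 ≤ n ∧ n < N + 1 := by simpa [Finset.mem_Ico] using hn
              rw [← pow_add, ih (m' + n) (by omega) (by omega), smul_zero]
  have hfin := main (N + 1) 1 le_rfl (by omega)
  rwa [pow_one] at hfin

/-- for any truncation, T ↦ exp(T) is an injective group homomorphism
from (𝔟̄, +) into (𝒢, ∘) with image 𝒢̄. -/
theorem exp_trunc_injective_hom
    (K N : ℕ) (hN : 0 < N) (hK : N < K) (hX : ExcInvariant K N)
    (I' : Set (ExIdx K N)) :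
    Set.InjOn (NormedSpace.exp)
      (truncSpace K N hX I' : Set (Hspace K N →L[ℝ] Hspace K N)) ∧
    (∀ T ∈ truncSpace K N hX I', ∀ S ∈ truncSpace K N hX I',
      NormedSpace.exp (T + S) = NormedSpace.exp T * NormedSpace.exp S) ∧
    (∀ T ∈ truncSpace K N hX I', NormedSpace.exp T ∈ Gset K N hX) ∧
    NormedSpace.exp '' (truncSpace K N hX I' : Set (Hspace K N →L[ℝ] Hspace K N)) =
      GsetBar K N hX I' := by
  have hNK : N ≤ K := hK.le
  have htc : truncSpace K N hX I' ≤ clusterSpace K N hX :=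
    Submodule.span_mono (Set.image_subset_range _ _)
  have hcomm : ∀ T ∈ truncSpace K N hX I', ∀ S ∈ truncSpace K N hX I', Commute T S :=
    fun T hT S hS => clusterSpace_commute K N hX (htc hT) (htc hS)
  have hhom : ∀ T ∈ truncSpace K N hX I', ∀ S ∈ truncSpace K N hX I',
      NormedSpace.exp (T + S) = NormedSpace.exp T * NormedSpace.exp S :=
    fun T hT S hS => NormedSpace.exp_add_of_commute (hcomm T hT S hS)
  refine ⟨?_, hhom, ?_, ?_⟩
  · -- injectivity
    intro T hT S hS heq
    have hT' : T ∈ truncSpace K N hX I' := hT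
    have hS' : S ∈ truncSpace K N hX I' := hS
    have hD : T - S ∈ truncSpace K N hX I' := sub_mem hT' hS'
    have hC : Commute T (-S) := (hcomm T hT' S hS').neg_right
    have h1 : NormedSpace.exp (T - S) = 1 := by
      rw [sub_eq_add_neg, NormedSpace.exp_add_of_commute hC, heq,
        ← NormedSpace.exp_add_of_commute (Commute.refl S).neg_right, add_neg_cancel,
        NormedSpace.exp_zero]
    have h0 := exp_eq_one_nilpotent K N hN (T - S)
      (cluster_nilpotent K N hX (htc hD)) h1
    exact sub_eq_zero.1 h0
  · -- lands in Gset
    intro T hT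
    have hTc : T ∈ clusterSpace K N hX := htc hT
    have hpowmem : ∀ n : ℕ, T ^ (n + 1) ∈ clusterSpace K N hX := by
      intro n
      induction n with
      | zero => rwa [pow_one]
      | succ n ih => rw [pow_succ]; exact clusterSpace_mul_mem K N hNK hX ih hTc
    refine ⟨∑ n ∈ Finset.Ico 1 (N + 1), ((n.factorial : ℝ))⁻¹ • T ^ n, ?_, ?_⟩
    · refine Submodule.sum_mem _ fun n hn => ?_
      have h1n : 1 ≤ n := (Finset.mem_Ico.1 hn).1
      obtain ⟨m, rfl⟩ : ∃ m, n = m + 1 := ⟨n - 1, by omega⟩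
      exact Submodule.smul_mem _ _ (hpowmem m)
    · rw [exp_eq_sum_of_pow_eq_zero K N T (N + 1) (cluster_nilpotent K N hX hTc),
        Finset.range_eq_Ico, Finset.sum_eq_sum_Ico_succ_bot (by omega : 0 < N + 1)]
      have h00 : ((Nat.factorial 0 : ℝ))⁻¹ • T ^ 0 = 1 := by simp [Nat.factorial]
      rw [h00]
  · -- image description
    ext G
    constructor
    · rintro ⟨T, hT, rfl⟩
      exact ⟨T, hT, rfl⟩
    · rintro ⟨T, hT, h⟩
      exact ⟨T, hT, h.symm⟩
end CC
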